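/- arXiv:0807.0519 — 3 statements merged into one kernel-verified Lean document; each statement's English description precedes it below -/
import Mathlib

section
/- The half-1/2-Hölder norm of Kufarev's driving term is exactly 3√2; that is, sup over s ≠ t of |u(t) − u(s)|/|t−s|^{1/2} equals 3√2, where u(t) = 3·arcsin(√(1 − e^{−2t})). -/
/-!
Since `u t = 3 arccos (e^{-t})`, for `t > 0` its derivative is `3 / √(e^{2t} - 1) ≤ 3 / √(2t)`,
the derivative of `3 √(2t)`. So the increments of `u` are dominated by those of `3 √(2t)`, and
`√t - √s ≤ √(t - s)` turns this into the bound `3√2`. Conversely `arcsin y ≥ y` and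
`1 - e^{-2t} ≥ 2t e^{-2t}` give `u t ≥ 3 √(2t) e^{-t}`, so the quotient at `(0, t)` tends to `3√2`
as `t → 0⁺`.
-/

open Real Set Filter Topology

theorem Real.sqrt_sub_sqrt_le_sqrt_sub {s t : ℝ} (hs : 0 ≤ s) (hst : s ≤ t) :
    √t - √s ≤ √(t - s) := by
  have h : √t ≤ √s + √(t - s) := by
    rw [sqrt_le_left (by positivity)]
    nlinarith [sq_sqrt hs, sq_sqrt (sub_nonneg.2 hst), sqrt_nonneg s, sqrt_nonneg (t - s)]
  linarith

theorem Real.self_le_arcsin {y : ℝ} (hy₀ : 0 ≤ y) (hy₁ : y ≤ 1) : y ≤ arcsin y := by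
  rw [le_arcsin_iff_sin_le ⟨by linarith [pi_pos], by linarith [pi_gt_three]⟩ ⟨by linarith, hy₁⟩]
  exact sin_le hy₀

theorem abs_sub_le_sub_of_abs_deriv_le {D : Set ℝ} (hD : Convex ℝ D) {f g f' g' : ℝ → ℝ}
    (hf : ContinuousOn f D) (hg : ContinuousOn g D)
    (hf' : ∀ x ∈ interior D, HasDerivAt f (f' x) x)
    (hg' : ∀ x ∈ interior D, HasDerivAt g (g' x) x)
    (hle : ∀ x ∈ interior D, |f' x| ≤ g' x) {s t : ℝ} (hs : s ∈ D) (ht : t ∈ D) (hst : s ≤ t) :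
    |f t - f s| ≤ g t - g s := by
  have hsub : MonotoneOn (fun x => g x - f x) D :=
    monotoneOn_of_hasDerivWithinAt_nonneg hD (hg.sub hf)
      (fun x hx => ((hg' x hx).sub (hf' x hx)).hasDerivWithinAt)
      (fun x hx => sub_nonneg.2 ((le_abs_self _).trans (hle x hx)))
  have hadd : MonotoneOn (fun x => g x + f x) D :=
    monotoneOn_of_hasDerivWithinAt_nonneg hD (hg.add hf)
      (fun x hx => ((hg' x hx).add (hf' x hx)).hasDerivWithinAt)
      (fun x hx => by linarith [neg_abs_le (f' x), hle x hx])
  have h₁ := hsub hs ht hst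
  have h₂ := hadd hs ht hst
  simp only at h₁ h₂
  rw [abs_le]
  constructor <;> linarith

noncomputable def kufarevDrivingTerm (t : ℝ) : ℝ := 3 * arcsin (√(1 - exp (-2 * t)))

theorem kufarevDrivingTerm_eq_arccos (t : ℝ) : kufarevDrivingTerm t = 3 * arccos (exp (-t)) := by
  rw [kufarevDrivingTerm, arccos_eq_arcsin (exp_nonneg _), ← exp_nat_mul]
  norm_num

theorem kufarevDrivingTerm_zero : kufarevDrivingTerm 0 = 0 := by
  simp [kufarevDrivingTerm]

theorem continuous_kufarevDrivingTerm : Continuous kufarevDrivingTerm := by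
  unfold kufarevDrivingTerm; fun_prop

theorem hasDerivAt_kufarevDrivingTerm {t : ℝ} (ht : 0 < t) :
    HasDerivAt kufarevDrivingTerm (3 / √(exp (2 * t) - 1)) t := by
  have hc : exp (-t) < 1 := exp_lt_one_iff.2 (by linarith)
  have h := ((hasDerivAt_arccos (by linarith [exp_pos (-t)]) hc.ne).comp t
    (hasDerivAt_neg t).exp).const_mul 3
  rw [funext kufarevDrivingTerm_eq_arccos]
  refine h.congr_deriv ?_
  have hsq : exp (2 * t) - 1 = (1 - exp (-t) ^ 2) * exp t ^ 2 := by
    rw [sub_mul, ← mul_pow, ← exp_add, ← exp_nat_mul]; norm_num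
  have hpos : 0 < 1 - exp (-t) ^ 2 := by nlinarith [exp_pos (-t)]
  rw [hsq, sqrt_mul hpos.le, sqrt_sq (exp_nonneg t), exp_neg]
  field_simp

theorem hasDerivAt_three_mul_sqrt_two_mul {x : ℝ} (hx : 0 < x) :
    HasDerivAt (fun x => 3 * √(2 * x)) (3 / √(2 * x)) x := by
  refine ((((hasDerivAt_id x).const_mul 2).sqrt (by positivity)).const_mul 3).congr_deriv ?_
  simp only [id]
  field_simp

theorem abs_kufarevDrivingTerm_sub_le {s t : ℝ} (hs : 0 ≤ s) (ht : 0 ≤ t) :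
    |kufarevDrivingTerm t - kufarevDrivingTerm s| ≤ 3 * √2 * √|t - s| := by
  wlog hst : s ≤ t generalizing s t
  · rw [abs_sub_comm, abs_sub_comm t]
    exact this ht hs (le_of_not_ge hst)
  have hint : ∀ x ∈ interior (Ici (0 : ℝ)), 0 < x := by simp
  have hderiv_le {x : ℝ} (hx : 0 < x) : |3 / √(exp (2 * x) - 1)| ≤ 3 / √(2 * x) := by
    have hlin : 2 * x ≤ exp (2 * x) - 1 := by linarith [add_one_le_exp (2 * x)]
    rw [abs_of_nonneg (by positivity)]
    gcongr
  calc |kufarevDrivingTerm t - kufarevDrivingTerm s|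
      ≤ 3 * √(2 * t) - 3 * √(2 * s) :=
        abs_sub_le_sub_of_abs_deriv_le (convex_Ici 0) continuous_kufarevDrivingTerm.continuousOn
          (by fun_prop : Continuous fun x => 3 * √(2 * x)).continuousOn
          (fun x hx => hasDerivAt_kufarevDrivingTerm (hint x hx))
          (fun x hx => hasDerivAt_three_mul_sqrt_two_mul (hint x hx))
          (fun x hx => hderiv_le (hint x hx)) hs ht hst
    _ = 3 * √2 * (√t - √s) := by rw [sqrt_mul zero_le_two, sqrt_mul zero_le_two]; ring
    _ ≤ 3 * √2 * √|t - s| := by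
        rw [abs_of_nonneg (sub_nonneg.2 hst)]
        gcongr
        exact sqrt_sub_sqrt_le_sqrt_sub hs hst

theorem mul_exp_neg_le_kufarevDrivingTerm {t : ℝ} (ht : 0 ≤ t) :
    3 * √(2 * t) * exp (-t) ≤ kufarevDrivingTerm t := by
  have hlin : 2 * t ≤ exp (2 * t) - 1 := by linarith [add_one_le_exp (2 * t)]
  have hexp : exp (-2 * t) = exp (-t) ^ 2 := by rw [← exp_nat_mul]; ring_nf
  have hy : 2 * t * exp (-2 * t) ≤ 1 - exp (-2 * t) := by
    have := mul_le_mul_of_nonneg_right hlin (exp_nonneg (-2 * t))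
    rwa [sub_mul, ← exp_add, one_mul, show 2 * t + -2 * t = 0 by ring, exp_zero] at this
  have hy₁ : √(1 - exp (-2 * t)) ≤ 1 := sqrt_le_one.2 (by linarith [exp_pos (-2 * t)])
  have key : √(2 * t) * exp (-t) ≤ √(1 - exp (-2 * t)) := by
    calc √(2 * t) * exp (-t) = √(2 * t * exp (-2 * t)) := by
          rw [hexp, sqrt_mul (by positivity : (0 : ℝ) ≤ 2 * t), sqrt_sq (exp_nonneg _)]
      _ ≤ √(1 - exp (-2 * t)) := sqrt_le_sqrt hy
  unfold kufarevDrivingTerm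
  linarith [self_le_arcsin (sqrt_nonneg _) hy₁]

/-- The `1/2`-Hölder norm of Kufarev's driving term `u(t) = 3 arcsin (√(1 - e^{-2t}))`
is exactly `3√2`: the supremum of `|u t - u s| / |t - s|^{1/2}` over `s ≠ t`, `s, t ≥ 0`,
equals `3√2`. -/
theorem kufarev_driving_term_holder_norm :
    let u : ℝ → ℝ := fun t => 3 * Real.arcsin (Real.sqrt (1 - Real.exp (-2 * t)))
    IsLUB {x : ℝ | ∃ s t : ℝ, 0 ≤ s ∧ 0 ≤ t ∧ s ≠ t ∧
        x = |u t - u s| / |t - s| ^ ((1:ℝ)/2)}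
      (3 * Real.sqrt 2) := by
  intro u
  rw [show u = kufarevDrivingTerm from rfl]
  simp_rw [← sqrt_eq_rpow]
  refine ⟨?_, fun b hb => ?_⟩
  · rintro _ ⟨s, t, hs, ht, hne, rfl⟩
    rw [div_le_iff₀ (sqrt_pos.2 (abs_pos.2 (sub_ne_zero.2 hne.symm)))]
    exact abs_kufarevDrivingTerm_sub_le hs ht
  · have hlim : Tendsto (fun t => 3 * √2 * exp (-t)) (𝓝[>] 0) (𝓝 (3 * √2)) := by
      have hcont : Continuous fun t : ℝ => 3 * √2 * exp (-t) := by fun_prop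
      simpa using (hcont.tendsto 0).mono_left nhdsWithin_le_nhds
    refine le_of_tendsto hlim (eventually_nhdsWithin_of_forall fun t (ht : 0 < t) => ?_)
    refine le_trans ?_ (hb ⟨0, t, le_rfl, ht.le, ht.ne, rfl⟩)
    rw [kufarevDrivingTerm_zero, sub_zero, sub_zero, abs_of_pos ht,
      abs_of_nonneg ((mul_exp_neg_le_kufarevDrivingTerm ht.le).trans' (by positivity)),
      le_div_iff₀ (sqrt_pos.2 ht)]
    calc 3 * √2 * exp (-t) * √t = 3 * √(2 * t) * exp (-t) := by rw [sqrt_mul zero_le_two]; ring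
      _ ≤ kufarevDrivingTerm t := mul_exp_neg_le_kufarevDrivingTerm ht.le
end

section
/- Let c ≥ 0 and let φ : (0,δ₀) → ℝ be continuously differentiable satisfying t·φ'(t) = 2√t/(√t·φ(t) − λ(t)) − φ(t)/2, where λ : (0,δ₀) → ℝ is continuous with λ(t) < √t·φ(t) for all t and lim_{t→0+} λ(t)/√t = c. Then for every ε > 0 there exists δ > 0 such that φ(t) ≤ (c + ε + √((c+ε)² + 16))/2 for all t ∈ (0, δ), provided lim_{t→0+} φ(t) exists. -/
open Real Set Filter Topology

/-! If `φ → L` with `L > c` and `L (L - c) > 4`, the right-hand side of the ODE tends to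
`2 / (L - c) - L / 2 < 0`, so `t φ'(t) ≤ -m < 0` near `0`; then `φ(t) + m log t` is antitone,
hence `φ(t) ≥ C - m log t → ∞`, contradicting convergence. So `L` lies below the positive root
`(x + √(x² + 16)) / 2` of `B (B - x) = 4` for every `x > c`. -/

theorem tendsto_atTop_of_mul_deriv_le_neg {f f' : ℝ → ℝ} {m : ℝ} (hm : 0 < m)
    (h : ∀ᶠ t in 𝓝[>] 0, HasDerivAt f (f' t) t ∧ t * f' t ≤ -m) :
    Tendsto f (𝓝[>] 0) atTop := by
  obtain ⟨δ, hδ, hsub⟩ := mem_nhdsGT_iff_exists_Ioo_subset.mp h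
  set g : ℝ → ℝ := fun t => f t + m * log t
  have hg : ∀ t ∈ Ioo 0 δ, HasDerivAt g (f' t + m * t⁻¹) t := fun t ht =>
    (hsub ht).1.add ((hasDerivAt_log ht.1.ne').const_mul m)
  have hanti : AntitoneOn g (Ioo 0 δ) := by
    refine antitoneOn_of_hasDerivWithinAt_nonpos (f' := fun t => f' t + m * t⁻¹) (convex_Ioo 0 δ)
      (fun t ht => (hg t ht).continuousAt.continuousWithinAt) (fun t ht => ?_) (fun t ht => ?_)
      <;> rw [interior_Ioo] at ht
    · exact (hg t ht).hasDerivWithinAt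
    · have hrw : f' t + m * t⁻¹ = (t * f' t + m) * t⁻¹ := by field_simp [ht.1.ne']
      rw [hrw]
      exact mul_nonpos_of_nonpos_of_nonneg (by linarith [(hsub ht).2]) (inv_nonneg.mpr ht.1.le)
  have ht₀ : δ / 2 ∈ Ioo 0 δ := ⟨half_pos hδ, half_lt_self hδ⟩
  have hbound : ∀ᶠ s in 𝓝[>] 0, g (δ / 2) + -(m * log s) ≤ f s := by
    filter_upwards [Ioo_mem_nhdsGT ht₀.1] with s hs
    have := hanti ⟨hs.1, hs.2.trans ht₀.2⟩ ht₀ hs.2.le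
    simp only [g] at this ⊢
    linarith
  exact tendsto_atTop_mono' _ hbound <| tendsto_atTop_add_const_left _ _ <|
    tendsto_neg_atBot_atTop.comp (tendsto_log_nhdsGT_zero.const_mul_atBot hm)

theorem tendsto_loewner_rhs {φ lam : ℝ → ℝ} {c L : ℝ} (hL : Tendsto φ (𝓝[>] 0) (𝓝 L))
    (hlam : Tendsto (fun t => lam t / √t) (𝓝[>] 0) (𝓝 c)) (hLc : L ≠ c) :
    Tendsto (fun t => 2 * √t / (√t * φ t - lam t) - φ t / 2) (𝓝[>] 0)
      (𝓝 (2 / (L - c) - L / 2)) := by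
  have hlim : Tendsto (fun t => 2 / (φ t - lam t / √t) - φ t / 2) (𝓝[>] 0)
      (𝓝 (2 / (L - c) - L / 2)) :=
    (tendsto_const_nhds.div (hL.sub hlam) (sub_ne_zero.mpr hLc)).sub (hL.div_const 2)
  refine hlim.congr' ?_
  filter_upwards [self_mem_nhdsWithin] with t ht
  have hst : 0 < √t := sqrt_pos.mpr ht
  rw [← mul_div_mul_left 2 _ hst.ne', mul_sub, mul_div_cancel₀ _ hst.ne', mul_comm]

theorem loewner_phi_limit_bound {c δ₀ L : ℝ} (hδ₀ : 0 < δ₀) {φ φ' lam : ℝ → ℝ}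
    (hφ : ∀ t ∈ Ioo 0 δ₀, HasDerivAt φ (φ' t) t)
    (hode : ∀ t ∈ Ioo 0 δ₀, t * φ' t = 2 * √t / (√t * φ t - lam t) - φ t / 2)
    (hlam : Tendsto (fun t => lam t / √t) (𝓝[>] 0) (𝓝 c))
    (hL : Tendsto φ (𝓝[>] 0) (𝓝 L)) :
    L ≤ c ∨ L * (L - c) ≤ 4 := by
  by_contra! ⟨hcL, hquad⟩
  set R := 2 / (L - c) - L / 2
  have hR : R < 0 := sub_neg.mpr <| by
    rw [div_lt_div_iff₀ (sub_pos.mpr hcL) two_pos]; nlinarith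
  have hnear : ∀ᶠ t in 𝓝[>] 0, t ∈ Ioo 0 δ₀ := Ioo_mem_nhdsGT hδ₀
  have hrate : Tendsto (fun t => t * φ' t) (𝓝[>] 0) (𝓝 R) := by
    refine (tendsto_loewner_rhs hL hlam hcL.ne').congr' ?_
    filter_upwards [hnear] with t ht
    exact (hode t ht).symm
  have hφ_atTop : Tendsto φ (𝓝[>] 0) atTop := by
    refine tendsto_atTop_of_mul_deriv_le_neg (f' := φ') (m := -R / 2) (by linarith) ?_
    filter_upwards [hnear, hrate.eventually_le_const (show R < R / 2 by linarith)] with t ht hle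
    exact ⟨hφ t ht, by linarith⟩
  exact not_tendsto_nhds_of_tendsto_atTop hφ_atTop L hL

theorem lt_loewner_barrier {c L ε : ℝ} (hε : 0 < ε) (h : L ≤ c ∨ L * (L - c) ≤ 4) :
    L < (c + ε + √((c + ε) ^ 2 + 16)) / 2 := by
  set x := c + ε
  set s := √(x ^ 2 + 16)
  have hs : s ^ 2 = x ^ 2 + 16 := sq_sqrt (by positivity)
  have hs0 : 0 ≤ s := sqrt_nonneg _
  have hxs : x < s := by nlinarith
  have hxs' : -x < s := by nlinarith
  -- `B = (x + s) / 2` satisfies `B (B - x) = 4`, and `B > max x 0`.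
  by_contra! hB
  rcases h with hLc | hquad
  · linarith
  · nlinarith

theorem loewner_phi_barrier_general (c δ₀ : ℝ) (hδ₀ : 0 < δ₀)
    (φ φ' lam : ℝ → ℝ)
    (hφ : ∀ t ∈ Set.Ioo 0 δ₀, HasDerivAt φ (φ' t) t)
    (hode : ∀ t ∈ Set.Ioo 0 δ₀,
      t * φ' t = 2 * Real.sqrt t / (Real.sqrt t * φ t - lam t) - φ t / 2)
    (hlam_lim : Tendsto (fun t => lam t / Real.sqrt t) (nhdsWithin 0 (Set.Ioi 0)) (nhds c))
    (hφ_lim : ∃ L : ℝ, Tendsto φ (nhdsWithin 0 (Set.Ioi 0)) (nhds L)) :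
    ∀ ε > 0, ∃ δ > 0, ∀ t ∈ Set.Ioo 0 δ,
      φ t ≤ (c + ε + Real.sqrt ((c + ε) ^ 2 + 16)) / 2 := by
  obtain ⟨L, hL⟩ := hφ_lim
  have hL_le := loewner_phi_limit_bound hδ₀ hφ hode hlam_lim hL
  intro ε hε
  obtain ⟨δ, hδ, hsub⟩ := mem_nhdsGT_iff_exists_Ioo_subset.mp <|
    hL.eventually_lt_const (lt_loewner_barrier hε hL_le)
  exact ⟨δ, hδ, fun t ht => (hsub ht).le⟩

/-- Barrier estimate for `φ(t) = h⁺(0,t)/√t`. If `φ` solves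
`t φ'(t) = 2√t/(√t φ(t) - λ(t)) - φ(t)/2` on `(0,δ₀)`, where `λ` is continuous with
`λ(t) < √t φ(t)` and `λ(t)/√t → c ≥ 0` as `t → 0+`, and `φ` has a limit at `0+`, then
for every `ε > 0` there is `δ > 0` with `φ(t) ≤ (c+ε+√((c+ε)²+16))/2` on `(0,δ)`. -/
theorem loewner_phi_barrier (c δ₀ : ℝ) (hc : 0 ≤ c) (hδ₀ : 0 < δ₀)
    (φ φ' lam : ℝ → ℝ)
    (hφ : ∀ t ∈ Set.Ioo 0 δ₀, HasDerivAt φ (φ' t) t)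
    (hφ'cont : ContinuousOn φ' (Set.Ioo 0 δ₀))
    (hode : ∀ t ∈ Set.Ioo 0 δ₀,
      t * φ' t = 2 * Real.sqrt t / (Real.sqrt t * φ t - lam t) - φ t / 2)
    (hlam_cont : ContinuousOn lam (Set.Ioo 0 δ₀))
    (hlam_lt : ∀ t ∈ Set.Ioo 0 δ₀, lam t < Real.sqrt t * φ t)
    (hlam_lim : Tendsto (fun t => lam t / Real.sqrt t) (nhdsWithin 0 (Set.Ioi 0)) (nhds c))
    (hφ_lim : ∃ L : ℝ, Tendsto φ (nhdsWithin 0 (Set.Ioi 0)) (nhds L)) :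
    ∀ ε > 0, ∃ δ > 0, ∀ t ∈ Set.Ioo 0 δ,
      φ t ≤ (c + ε + Real.sqrt ((c + ε) ^ 2 + 16)) / 2 :=
  loewner_phi_barrier_general c δ₀ hδ₀ φ φ' lam hφ hode hlam_lim hφ_lim
end

section
/- Let a₂ : (0,δ) → ℂ be a nonvanishing differentiable function satisfying a₂'(t)/a₂(t) = −2/(t·((b−c) + o(1))²) as t → 0+, where b > c are real constants. Then for every ε > 0, lim_{t→0+} a₂(t)·t^{2/(b−c)² + ε} = 0 and lim_{t→0+} |a₂(t)|·t^{2/(b−c)² − ε} = ∞. -/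
/-!
Since `a₂` does not vanish, `log ‖a₂‖` is differentiable with derivative
`Re (a₂'/a₂) = -2/(t ψ²)`, so `t · (log ‖a₂‖)' → -2/(b-c)²`. For `μ` on either side of
`2/(b-c)²`, pick `ν` strictly between the two: then `log ‖a₂ t‖ + ν log t` has a derivative of
constant sign near `0`, hence is monotone and so bounded on one side, while the remaining
`(μ - ν) log t` tends to `∓∞`. Exponentiating gives the two limits for `‖a₂ t‖ t^μ`.
-/

open Real Set Filter Topology InnerProductSpace

theorem HasDerivAt.log_norm {F : Type*} [NormedAddCommGroup F] [InnerProductSpace ℝ F]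
    {f : ℝ → F} {f' : F} {x : ℝ} (hf : HasDerivAt f f' x) (hx : f x ≠ 0) :
    HasDerivAt (fun s => Real.log ‖f s‖) (⟪f x, f'⟫_ℝ / ‖f x‖ ^ 2) x := by
  have hsq : ‖f x‖ ^ 2 ≠ 0 := by positivity
  have hlog : (fun s => Real.log ‖f s‖) = fun s => Real.log (‖f s‖ ^ 2) / 2 := by
    funext s
    rw [Real.log_pow]
    push_cast
    ring
  rw [hlog]
  exact ((hf.norm_sq.log hsq).div_const 2).congr_deriv (by ring)

theorem Complex.hasDerivAt_log_norm {f : ℝ → ℂ} {f' : ℂ} {x : ℝ} (hf : HasDerivAt f f' x)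
    (hx : f x ≠ 0) : HasDerivAt (fun s => Real.log ‖f s‖) (f' / f x).re x := by
  convert hf.log_norm hx using 1
  rw [Complex.inner, Complex.div_re, ← Complex.normSq_eq_norm_sq]
  simp only [Complex.mul_re, Complex.conj_re, Complex.conj_im]
  ring

theorem exists_eventually_le_of_hasDerivAt_nonneg {G G' : ℝ → ℝ}
    (h : ∀ᶠ t in 𝓝[>] 0, HasDerivAt G (G' t) t ∧ 0 ≤ G' t) :
    ∃ C, ∀ᶠ t in 𝓝[>] 0, G t ≤ C := by
  obtain ⟨u, hu, hsub⟩ := mem_nhdsGT_iff_exists_Ioo_subset.mp h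
  have hmono : MonotoneOn G (Ioo 0 u) := by
    refine monotoneOn_of_hasDerivWithinAt_nonneg (f' := G') (convex_Ioo 0 u)
      (fun t ht => (hsub ht).1.continuousAt.continuousWithinAt) (fun t ht => ?_) (fun t ht => ?_)
    · rw [interior_Ioo] at ht
      exact (hsub ht).1.hasDerivWithinAt
    · rw [interior_Ioo] at ht
      exact (hsub ht).2
  have hu2 : u / 2 ∈ Ioo 0 u := ⟨half_pos hu, half_lt_self hu⟩
  refine ⟨G (u / 2), ?_⟩
  filter_upwards [Ioo_mem_nhdsGT hu2.1] with t ht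
  exact hmono ⟨ht.1, ht.2.trans hu2.2⟩ hu2 ht.2.le

theorem tendsto_add_mul_log_atBot_of_tendsto_mul_deriv {F F' : ℝ → ℝ} {k μ : ℝ}
    (hF : ∀ᶠ t in 𝓝[>] 0, HasDerivAt F (F' t) t)
    (hlim : Tendsto (fun t => t * F' t) (𝓝[>] 0) (𝓝 (-k))) (hμ : k < μ) :
    Tendsto (fun t => F t + μ * log t) (𝓝[>] 0) atBot := by
  obtain ⟨ν, hkν, hνμ⟩ := exists_between hμ
  obtain ⟨C, hC⟩ : ∃ C, ∀ᶠ t in 𝓝[>] 0, F t + ν * log t ≤ C := by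
    refine exists_eventually_le_of_hasDerivAt_nonneg (G' := fun t => F' t + ν * t⁻¹) ?_
    filter_upwards [hF, hlim.eventually_const_lt (neg_lt_neg hkν),
      self_mem_nhdsWithin] with t hFt hνt (ht : 0 < t)
    refine ⟨hFt.add ((hasDerivAt_log ht.ne').const_mul ν), ?_⟩
    have : 0 ≤ (t * F' t + ν) * t⁻¹ := by nlinarith [inv_pos.mpr ht]
    simpa [add_mul, mul_comm t, mul_assoc, ht.ne'] using this
  have hlog : Tendsto (fun t => (μ - ν) * log t) (𝓝[>] 0) atBot :=
    tendsto_log_nhdsGT_zero.const_mul_atBot (sub_pos.mpr hνμ)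
  refine (tendsto_atBot_add_left_of_ge' _ C hC hlog).congr fun t => ?_
  ring

theorem tendsto_add_mul_log_atTop_of_tendsto_mul_deriv {F F' : ℝ → ℝ} {k μ : ℝ}
    (hF : ∀ᶠ t in 𝓝[>] 0, HasDerivAt F (F' t) t)
    (hlim : Tendsto (fun t => t * F' t) (𝓝[>] 0) (𝓝 (-k))) (hμ : μ < k) :
    Tendsto (fun t => F t + μ * log t) (𝓝[>] 0) atTop := by
  have hneg := tendsto_add_mul_log_atBot_of_tendsto_mul_deriv (F := fun t => -F t)
    (F' := fun t => -F' t) (hF.mono fun t ht => ht.neg)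
    (by simpa using hlim.neg) (neg_lt_neg hμ)
  refine (tendsto_neg_atBot_atTop.comp hneg).congr fun t => ?_
  simp only [Function.comp_apply]
  ring

/-- Growth of the coefficient `a₂(t)`. Suppose `a₂ : (0,δ) → ℂ` is nonvanishing and
differentiable with `a₂'(t)/a₂(t) = -2/(t ψ(t)²)` where `ψ(t) → b - c > 0` as `t → 0+`.
Then for every `ε > 0`, `a₂(t) t^{2/(b-c)²+ε} → 0` and `|a₂(t)| t^{2/(b-c)²-ε} → ∞`. -/
theorem loewner_a2_growth (b c δ : ℝ) (hbc : c < b) (hδ : 0 < δ)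
    (a₂ a₂' : ℝ → ℂ) (ψ : ℝ → ℝ)
    (hne : ∀ t ∈ Set.Ioo 0 δ, a₂ t ≠ 0)
    (hderiv : ∀ t ∈ Set.Ioo 0 δ, HasDerivAt a₂ (a₂' t) t)
    (hode : ∀ t ∈ Set.Ioo 0 δ, a₂' t / a₂ t = -2 / (t * (ψ t) ^ 2))
    (hψ : Tendsto ψ (nhdsWithin 0 (Set.Ioi 0)) (nhds (b - c))) :
    ∀ ε > 0,
      Tendsto (fun t => a₂ t * ((t ^ (2 / (b - c) ^ 2 + ε) : ℝ) : ℂ))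
        (nhdsWithin 0 (Set.Ioi 0)) (nhds 0) ∧
      Tendsto (fun t => ‖a₂ t‖ * t ^ (2 / (b - c) ^ 2 - ε))
        (nhdsWithin 0 (Set.Ioi 0)) atTop := by
  intro ε hε
  have hnear : ∀ᶠ t in nhdsWithin 0 (Ioi 0), t ∈ Ioo 0 δ := Ioo_mem_nhdsGT hδ
  have hlogderiv : ∀ᶠ t in nhdsWithin 0 (Ioi 0),
      HasDerivAt (fun s => log ‖a₂ s‖) (-2 / (t * ψ t ^ 2)) t := by
    filter_upwards [hnear] with t ht
    convert Complex.hasDerivAt_log_norm (hderiv t ht) (hne t ht) using 1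
    rw [hode t ht]
    norm_cast
  have hlim : Tendsto (fun t => t * (-2 / (t * ψ t ^ 2))) (nhdsWithin 0 (Ioi 0))
      (nhds (-(2 / (b - c) ^ 2))) := by
    rw [← neg_div]
    refine (tendsto_const_nhds.div (hψ.pow 2) (by nlinarith)).congr' ?_
    filter_upwards [self_mem_nhdsWithin] with t (ht : 0 < t)
    rw [Pi.div_apply, ← mul_div_assoc, mul_div_mul_left _ _ ht.ne']
  have hnorm_rpow : ∀ p : ℝ, ∀ᶠ t in nhdsWithin 0 (Ioi 0),
      exp (log ‖a₂ t‖ + p * log t) = ‖a₂ t‖ * t ^ p := by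
    intro p
    filter_upwards [hnear] with t ht
    rw [exp_add, exp_log (norm_pos_iff.mpr (hne t ht)), rpow_def_of_pos ht.1, mul_comm p]
  constructor
  · rw [tendsto_zero_iff_norm_tendsto_zero]
    refine (tendsto_exp_atBot.comp (tendsto_add_mul_log_atBot_of_tendsto_mul_deriv hlogderiv hlim
      (lt_add_of_pos_right _ hε))).congr' ?_
    filter_upwards [hnorm_rpow (2 / (b - c) ^ 2 + ε), hnear] with t ht ht'
    rw [Function.comp_apply, ht, norm_mul, Complex.norm_real,
      norm_of_nonneg (rpow_nonneg ht'.1.le _)]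
  · refine (tendsto_exp_atTop.comp (tendsto_add_mul_log_atTop_of_tendsto_mul_deriv hlogderiv hlim
      (sub_lt_self _ hε))).congr' ?_
    filter_upwards [hnorm_rpow (2 / (b - c) ^ 2 - ε)] with t ht
    rw [Function.comp_apply, ht]
end
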